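/- Let p = 8ℓ + 1 be a prime with ℓ even, let n be an odd positive integer with 0 < n < 2ℓ, and let a be a nonzero element of F_p. Then for f = x^n·(x^4 + a), the remainder of f^{2ℓ} upon division by x^p - x has degree equal to p - 1; in particular f is not a permutation polynomial of F_p. -/

import Mathlib

/-!
Over a finite field with `q` elements, `∑ x, x ^ j` is `-1` if `0 < j` and `q - 1 ∣ j`, and `0`
otherwise. Hence the values of a polynomial of degree `< q` sum to minus its coefficient of
`X ^ (q - 1)`; as reduction modulo `X ^ q - X` does not change values, the remainder of `g` has
degree `q - 1` as soon as `∑ x, g(x) ≠ 0`. For `g = f ^ (2ℓ)` the same nonvanishing sum also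
shows that `f` is not a permutation, since a permutation would turn it into `∑ y, y ^ (2ℓ) = 0`.

Writing `ℓ = 2m`, so `p - 1 = 16m`, the binomial expansion gives
`∑ x, (x ^ n (x ^ 4 + a)) ^ (4m) = ∑ k, C(4m, k) a ^ (4m - k) ∑ x, x ^ (4mn + 4k)`, and since `n`
is odd, `4m ∤ mn`, so exactly one `k ≤ 4m` has `16m ∣ 4mn + 4k`. The sum is therefore
`-C(4m, k) a ^ (4m - k)`, which is nonzero because `4m < p`.
-/

open Polynomial Finset

namespace FiniteField

variable {K : Type*} [Field K] [Fintype K]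

theorem sum_pow_of_ne_zero {j : ℕ} (hj : j ≠ 0) :
    ∑ x : K, x ^ j = if Fintype.card K - 1 ∣ j then -1 else 0 := by
  classical
  rw [← sum_pow_units K j]
  refine (Fintype.sum_of_injective Units.val Units.val_injective _ _ (fun x hx => ?_)
    fun _ => rfl).symm
  obtain rfl : x = 0 := by_contra fun hx0 => hx ⟨Units.mk0 x hx0, rfl⟩
  exact zero_pow hj

theorem sum_pow_card_sub_one : ∑ x : K, x ^ (Fintype.card K - 1) = -1 := by
  rw [sum_pow_of_ne_zero (Nat.sub_ne_zero_of_lt Fintype.one_lt_card), if_pos dvd_rfl]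

theorem sum_eval_eq_neg_coeff {r : K[X]} (hr : r.natDegree < Fintype.card K) :
    ∑ x, r.eval x = -r.coeff (Fintype.card K - 1) := by
  have hq : Fintype.card K = Fintype.card K - 1 + 1 := (Nat.sub_add_cancel Fintype.card_pos).symm
  simp_rw [eval_eq_sum_range' hr]
  rw [sum_comm, hq, sum_range_succ, Nat.add_sub_cancel, ← mul_sum, sum_pow_card_sub_one,
    sum_eq_zero fun i hi => ?_, zero_add, mul_neg_one]
  rw [← mul_sum, sum_pow_lt_card_sub_one K i (mem_range.mp hi), mul_zero]

theorem eval_modByMonic_X_pow_card_sub_X (g : K[X]) (x : K) :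
    (g %ₘ (X ^ Fintype.card K - X)).eval x = g.eval x := by
  simp [modByMonic_eq_sub_mul_div, pow_card]

theorem natDegree_modByMonic_X_pow_card_sub_X_lt (g : K[X]) :
    (g %ₘ (X ^ Fintype.card K - X)).natDegree < Fintype.card K := by
  have hq : 1 < Fintype.card K := Fintype.one_lt_card
  have hdeg := X_pow_card_sub_X_natDegree_eq K hq
  have hmonic : (X ^ Fintype.card K - X : K[X]).Monic := monic_X_pow_sub (by simpa using hq)
  have hne_one : (X ^ Fintype.card K - X : K[X]) ≠ 1 := fun h => by
    simp only [h, natDegree_one] at hdeg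
    exact Fintype.card_ne_zero hdeg.symm
  simpa [hdeg] using natDegree_modByMonic_lt g hmonic hne_one

theorem degree_modByMonic_X_pow_card_sub_X {g : K[X]} (h : ∑ x, g.eval x ≠ 0) :
    (g %ₘ (X ^ Fintype.card K - X)).degree = (Fintype.card K - 1 : ℕ) := by
  set r := g %ₘ (X ^ Fintype.card K - X)
  have hlt : r.natDegree < Fintype.card K := natDegree_modByMonic_X_pow_card_sub_X_lt g
  have hsum : ∑ x, g.eval x = ∑ x, r.eval x :=
    sum_congr rfl fun x _ => (eval_modByMonic_X_pow_card_sub_X g x).symm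
  have hcoeff : r.coeff (Fintype.card K - 1) ≠ 0 := by
    simpa [hsum, sum_eval_eq_neg_coeff hlt] using h
  rw [degree_eq_iff_natDegree_eq fun h0 => by simp [h0] at hcoeff]
  exact le_antisymm (Nat.le_sub_one_of_lt hlt) (le_natDegree_of_ne_zero hcoeff)

theorem sum_pow_comp_eq_zero_of_bijective {f : K → K} (hf : f.Bijective) {i : ℕ}
    (hi : i < Fintype.card K - 1) : ∑ x, f x ^ i = 0 := by
  rw [hf.sum_comp (· ^ i), sum_pow_lt_card_sub_one K i hi]

end FiniteField

theorem Nat.dvd_add_iff_eq_sub_mod {M c k : ℕ} (hM : 0 < M) (hc : ¬M ∣ c) (hk : k ≤ M) :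
    M ∣ c + k ↔ k = M - c % M := by
  have hpos : 0 < c % M := Nat.pos_of_ne_zero fun h => hc (Nat.dvd_of_mod_eq_zero h)
  have hlt : c % M < M := Nat.mod_lt c hM
  rw [Nat.dvd_iff_mod_eq_zero, ← Nat.mod_add_mod, ← Nat.dvd_iff_mod_eq_zero]
  constructor
  · intro h
    have := Nat.eq_of_dvd_of_lt_two_mul (by omega) h (by omega)
    omega
  · rintro rfl
    rw [Nat.add_sub_cancel' hlt.le]

theorem pow_mul_pow_four_add_pow_eq_sum {R : Type*} [CommSemiring R] (x a : R) (n N : ℕ) :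
    (x ^ n * (x ^ 4 + a)) ^ N =
      ∑ k ∈ range (N + 1), a ^ (N - k) * N.choose k * x ^ (n * N + 4 * k) := by
  rw [mul_pow, add_pow, mul_sum]
  refine sum_congr rfl fun k _ => ?_
  rw [pow_add, pow_mul, pow_mul]
  ring

theorem ZMod.sum_pow_mul_pow_four_add_ne_zero {p m n : ℕ} [Fact p.Prime] (hp : p = 16 * m + 1)
    (hn : Odd n) {a : ZMod p} (ha : a ≠ 0) :
    ∑ x : ZMod p, (x ^ n * (x ^ 4 + a)) ^ (4 * m) ≠ 0 := by
  have hm : 0 < m := Nat.pos_of_ne_zero fun h => (Fact.out : p.Prime).one_lt.ne' (by omega)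
  set k₀ := 4 * m - m * n % (4 * m)
  have hk₀ : k₀ < p := by omega
  have hexp : ∀ k ≤ 4 * m, p - 1 ∣ n * (4 * m) + 4 * k ↔ k = k₀ := by
    intro k hk
    have hndvd : ¬4 * m ∣ m * n := by
      rw [mul_comm 4 m, Nat.mul_dvd_mul_iff_left hm]
      obtain ⟨j, rfl⟩ := hn
      omega
    rw [show p - 1 = 4 * (4 * m) by omega, show n * (4 * m) + 4 * k = 4 * (m * n + k) by ring,
      Nat.mul_dvd_mul_iff_left four_pos]
    exact Nat.dvd_add_iff_eq_sub_mod (by omega) hndvd hk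
  have hsum : ∑ x : ZMod p, (x ^ n * (x ^ 4 + a)) ^ (4 * m) =
      -(a ^ (4 * m - k₀) * (4 * m).choose k₀) := by
    calc ∑ x : ZMod p, (x ^ n * (x ^ 4 + a)) ^ (4 * m)
        = ∑ k ∈ range (4 * m + 1),
            a ^ (4 * m - k) * (4 * m).choose k * ∑ x : ZMod p, x ^ (n * (4 * m) + 4 * k) := by
          simp_rw [pow_mul_pow_four_add_pow_eq_sum, mul_sum]
          exact sum_comm
      _ = ∑ k ∈ range (4 * m + 1), if k = k₀ then -(a ^ (4 * m - k) * (4 * m).choose k) else 0 := by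
          refine sum_congr rfl fun k hk => ?_
          have hpos : n * (4 * m) + 4 * k ≠ 0 := by have := hn.pos; positivity
          simp only [FiniteField.sum_pow_of_ne_zero hpos, ZMod.card,
            hexp k (Nat.lt_succ_iff.mp (mem_range.mp hk))]
          split_ifs <;> ring
      _ = -(a ^ (4 * m - k₀) * (4 * m).choose k₀) := by
          rw [sum_ite_eq', if_pos (mem_range.mpr (by omega))]
  have hchoose : ((4 * m).choose k₀ : ZMod p) ≠ 0 := by
    rw [Ne, ZMod.natCast_eq_zero_iff, ← (Fact.out : p.Prime).coprime_iff_not_dvd]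
    exact Nat.Prime.coprime_choose_of_lt Fact.out (by omega) (by omega)
  rw [hsum]
  exact neg_ne_zero.mpr (mul_ne_zero (pow_ne_zero _ ha) hchoose)

theorem stmt_15_general (p ℓ : ℕ) (hp : p.Prime) (hpl : p = 8 * ℓ + 1)
    (hleven : Even ℓ)
    (n : ℕ) (hnodd : Odd n)
    (a : ZMod p) (ha : a ≠ 0) :
    (((X ^ n * (X ^ 4 + C a)) ^ (2 * ℓ) %ₘ (X ^ p - X)).degree
        = ((p - 1 : ℕ) : WithBot ℕ)) ∧
      ¬ Function.Bijective
        (fun x : ZMod p => Polynomial.eval x (X ^ n * (X ^ 4 + C a))) := by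
  have : Fact p.Prime := ⟨hp⟩
  obtain ⟨m, rfl⟩ := hleven
  have hsum : ∑ x : ZMod p, (X ^ n * (X ^ 4 + C a)).eval x ^ (2 * (m + m)) ≠ 0 := by
    simpa [show 2 * (m + m) = 4 * m by ring] using
      ZMod.sum_pow_mul_pow_four_add_ne_zero (by omega : p = 16 * m + 1) hnodd ha
  constructor
  · have hdeg := FiniteField.degree_modByMonic_X_pow_card_sub_X (K := ZMod p)
      (g := (X ^ n * (X ^ 4 + C a)) ^ (2 * (m + m))) (by simpa only [eval_pow] using hsum)
    rwa [ZMod.card] at hdeg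
  · have hlt : 2 * (m + m) < Fintype.card (ZMod p) - 1 := by
      rw [ZMod.card]; have := hp.two_le; omega
    exact fun hbij => hsum (FiniteField.sum_pow_comp_eq_zero_of_bijective hbij hlt)

theorem stmt_15 (p ℓ : ℕ) (hp : p.Prime) (hpl : p = 8 * ℓ + 1)
    (hleven : Even ℓ)
    (n : ℕ) (hn : 0 < n) (hn2l : n < 2 * ℓ) (hnodd : Odd n)
    (a : ZMod p) (ha : a ≠ 0) :
    (((X ^ n * (X ^ 4 + C a)) ^ (2 * ℓ) %ₘ (X ^ p - X)).degree
        = ((p - 1 : ℕ) : WithBot ℕ)) ∧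
      ¬ Function.Bijective
        (fun x : ZMod p => Polynomial.eval x (X ^ n * (X ^ 4 + C a))) :=
  stmt_15_general p ℓ hp hpl hleven n hnodd a ha
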